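/- With N = p1^m·p2 and D_0, ..., D_{p1p2−1} as in the context: every a ∈ {0, 1, ..., N−1} has a unique representation a ≡ −p2·i_a + p1^{m−1}·j_a (mod N) with 0 ≤ i_a ≤ p1^{m−1}−1 and 0 ≤ j_a ≤ p1·p2−1; and if a, a' ∈ {0, 1, ..., N−1} satisfy j_a = j_{a'}, then for every k with 0 ≤ k ≤ p1·p2−1, Σ_{x ∈ D_k} ψ(γ^a · x) = Σ_{x ∈ D_k} ψ(γ^{a'} · x). In other words, the character sum ψ over γ^a·D_k depends only on j_a and k, not on i_a. -/

import Mathlib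

/-!
Put `P = p1 ^ (m - 1)`. Splitting `D_k` into cyclotomic classes writes the sum over `γ^a D_k` as
the sum of the Gaussian periods `η(v)` along the window `v = a + k P + p2 r`, `0 ≤ r < P`, of an
arithmetic progression in `ℤ/N`. Since the trace is Frobenius invariant, `η(p v) = η(v)`.
As `p` is a primitive root modulo `p1^m` and modulo `p2`, the index `[(ℤ/N)ˣ : ⟨p⟩] = 2` forces
`gcd(φ(p1^m), p2 - 1) = 2`, and this makes `v + P p2` a `p`-power multiple of `v` whenever `P ∤ v`;
hence `η(v + P p2) = η(v)` for such `v`. Changing `i_a` by one slides the window by `p2`, trading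
one term for another that differs from it by `P p2` and is not divisible by `P`, so the sum does
not depend on `i_a`.
-/

open scoped Classical

noncomputable section

open Finset

theorem ZMod.existsUnique_neg_mul_add_mul {N P Q c : ℕ} (hN : N = P * Q) (hNpos : 0 < N)
    (hc : c.Coprime P) (x : ZMod N) :
    ∃! ij : ℕ × ℕ, (ij.1 < P ∧ ij.2 < Q) ∧
      x = -((c * ij.1 : ℕ) : ZMod N) + ((P * ij.2 : ℕ) : ZMod N) := by
  subst hN
  have hP : 0 < P := Nat.pos_of_mul_pos_right hNpos
  have : NeZero (P * Q) := ⟨hNpos.ne'⟩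
  set f : ℕ × ℕ → ZMod (P * Q) := fun ij =>
    -((c * ij.1 : ℕ) : ZMod (P * Q)) + ((P * ij.2 : ℕ) : ZMod (P * Q))
  have hf : Set.InjOn f (range P ×ˢ range Q : Finset (ℕ × ℕ)) := by
    rintro ⟨i, j⟩ hij ⟨i', j'⟩ hij' heq
    simp only [coe_product, coe_range, Set.mem_prod, Set.mem_Iio] at hij hij'
    have hi : i = i' := by
      have h := congrArg (ZMod.castHom (dvd_mul_right P Q) (ZMod P)) heq
      simp only [f, Nat.cast_mul, ZMod.castHom_apply, dvd_mul_right, ZMod.cast_add, ZMod.cast_neg,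
        ZMod.cast_mul, ZMod.cast_natCast, ZMod.natCast_self, zero_mul, add_zero, neg_inj] at h
      exact (Nat.ModEq.cancel_left_of_coprime hc.symm
        ((ZMod.natCast_eq_natCast_iff _ _ _).1 (by exact_mod_cast h))).eq_of_lt_of_lt hij.1 hij'.1
    subst hi
    have h : P * j ≡ P * j' [MOD P * Q] :=
      (ZMod.natCast_eq_natCast_iff _ _ _).1 (add_left_cancel heq)
    rw [(Nat.ModEq.mul_left_cancel' hP.ne' h).eq_of_lt_of_lt hij.2 hij'.2]
  have himage : (range P ×ˢ range Q).image f = univ :=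
    eq_univ_of_card _ (by
      rw [card_image_of_injOn hf, card_product, card_range, card_range, ZMod.card])
  obtain ⟨ij, hij, rfl⟩ := mem_image.1 (himage ▸ mem_univ x)
  exact ⟨ij, ⟨by simpa using hij, rfl⟩,
    fun ij' ⟨hij', heq⟩ => hf (by simpa using hij') hij heq.symm⟩

theorem ZMod.one_add_mul_pow_eq_one {p m : ℕ} (hm : m ≠ 0) (t : ZMod (p ^ m)) :
    (1 + p * t) ^ p ^ (m - 1) = 1 := by
  have h := dvd_sub_pow_of_dvd_sub (p := p) (a := 1 + p * t) (b := 1) ⟨t, by ring⟩ (m - 1)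
  rwa [Nat.sub_add_cancel (Nat.pos_of_ne_zero hm), one_pow, ← Nat.cast_pow, ZMod.natCast_self,
    zero_dvd_iff, sub_eq_zero] at h

theorem exists_dvd_and_pow_eq_of_pow_eq_one {G : Type*} [Group G] [Finite G] {g u : G}
    (hg : orderOf g = Nat.card G) {d e : ℕ} (hde : Nat.card G = d * e) (hu : u ^ d = 1) :
    ∃ x, e ∣ x ∧ g ^ x = u := by
  have hu_mem : u ∈ Submonoid.powers g := by
    rw [mem_powers_iff_mem_zpowers,
      Subgroup.eq_top_of_card_eq (Subgroup.zpowers g) (by rw [Nat.card_zpowers, hg])]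
    exact Subgroup.mem_top u
  obtain ⟨x, rfl⟩ := hu_mem
  refine ⟨x, ?_, rfl⟩
  have hd : d ≠ 0 := by
    rintro rfl
    exact Nat.card_pos.ne' (by rw [hde, zero_mul])
  rw [← pow_mul, ← orderOf_dvd_iff_pow_eq_one, hg, hde, mul_comm x] at hu
  exact Nat.dvd_of_mul_dvd_mul_left (Nat.pos_of_ne_zero hd) hu

theorem ZMod.exists_one_add_mul_mul_eq {ℓ m : ℕ} (hℓ : ℓ.Prime) {s : ℕ}
    (hs : ¬ ℓ ^ (m - 1) ∣ s) (c : ℕ) :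
    ∃ t : ZMod (ℓ ^ m), (1 + ℓ * t) * s = s + ((ℓ ^ (m - 1) * c : ℕ) : ZMod (ℓ ^ m)) := by
  have hs0 : s ≠ 0 := by rintro rfl; exact hs (dvd_zero _)
  obtain ⟨a, w, hw, rfl⟩ := Nat.exists_eq_pow_mul_and_not_dvd hs0 ℓ hℓ.ne_one
  have ha : a + 2 ≤ m := by
    by_contra! h
    exact hs (dvd_mul_of_dvd_left (pow_dvd_pow ℓ (by omega)) w)
  have hw_unit : (w : ZMod (ℓ ^ m)) * (w : ZMod (ℓ ^ m))⁻¹ = 1 :=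
    ZMod.coe_mul_inv_eq_one w ((hℓ.coprime_iff_not_dvd.2 hw).pow_left m).symm
  refine ⟨ℓ ^ (m - 2 - a) * c * (w : ZMod (ℓ ^ m))⁻¹, ?_⟩
  have hexp : m - 1 = 1 + (m - 2 - a) + a := by omega
  push_cast
  rw [hexp]
  linear_combination (ℓ : ZMod (ℓ ^ m)) ^ (1 + (m - 2 - a) + a) * c * hw_unit

theorem ZMod.natCast_eq_natCast_iff_of_coprime {a b : ℕ} (hab : a.Coprime b) (x y : ℕ) :
    (x : ZMod (a * b)) = y ↔ (x : ZMod a) = y ∧ (x : ZMod b) = y := by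
  simp only [ZMod.natCast_eq_natCast_iff, Nat.modEq_and_modEq_iff_modEq_mul hab]

theorem ZMod.orderOf_natCast_mul {a b : ℕ} (hab : a.Coprime b) (x : ℕ) :
    orderOf (x : ZMod (a * b)) = (orderOf (x : ZMod a)).lcm (orderOf (x : ZMod b)) := by
  rw [← MulEquiv.orderOf_eq (ZMod.chineseRemainder hab).toMulEquiv, RingEquiv.toMulEquiv_eq_coe,
    RingEquiv.coe_toMulEquiv, map_natCast, Prod.orderOf, Prod.fst_natCast, Prod.snd_natCast]

theorem Nat.gcd_totient_eq_two_of_orderOf_eq {a b p : ℕ} (hab : a.Coprime b) (hpos : 0 < a * b)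
    (ha : orderOf (p : ZMod a) = Nat.totient a) (hb : orderOf (p : ZMod b) = Nat.totient b)
    (hab2 : 2 * orderOf (p : ZMod (a * b)) = Nat.totient (a * b)) :
    (Nat.totient a).gcd (Nat.totient b) = 2 := by
  rw [ZMod.orderOf_natCast_mul hab, ha, hb, Nat.totient_mul hab] at hab2
  have hlcm : 0 < (Nat.totient a).lcm (Nat.totient b) := by
    have := Nat.totient_pos.2 hpos
    rw [Nat.totient_mul hab] at this
    exact Nat.pos_of_ne_zero (by rintro h; rw [h] at hab2; omega)
  exact Nat.eq_of_mul_eq_mul_right hlcm (by rw [Nat.gcd_mul_lcm, hab2])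

theorem ZMod.dvd_pow_orderOf_sub_one {p : ℕ} (hp : 0 < p) (n : ℕ) :
    n ∣ p ^ orderOf (p : ZMod n) - 1 := by
  rw [← ZMod.natCast_eq_zero_iff, Nat.cast_sub (Nat.one_le_pow _ _ hp), Nat.cast_pow,
    pow_orderOf_eq_one, Nat.cast_one, sub_self]

theorem ZMod.exists_pow_mul_eq_add {ℓ m n p : ℕ} (hℓ : ℓ.Prime) (hn : (ℓ ^ m).Coprime n)
    (hp : orderOf (p : ZMod (ℓ ^ m)) = Nat.totient (ℓ ^ m))
    (hgcd : (Nat.totient (ℓ ^ m)).gcd (orderOf (p : ZMod n)) ∣ ℓ - 1)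
    {s : ℕ} (hs : ¬ ℓ ^ (m - 1) ∣ s) :
    ∃ e, ((p ^ e * s : ℕ) : ZMod (ℓ ^ m * n)) = ((s + ℓ ^ (m - 1) * n : ℕ) : ZMod (ℓ ^ m * n)) := by
  have hm : m ≠ 0 := by rintro rfl; exact hs (by simp)
  have : NeZero (ℓ ^ m) := ⟨pow_ne_zero m hℓ.ne_zero⟩
  obtain ⟨t, ht⟩ := ZMod.exists_one_add_mul_mul_eq hℓ hs n
  have hu : (1 + ℓ * t) ^ ℓ ^ (m - 1) = 1 := ZMod.one_add_mul_pow_eq_one hm t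
  -- `1 + ℓ * t` has `ℓ`-power order, so it is `p ^ x` with `ℓ - 1 ∣ x`; the gcd condition then
  -- allows `e ≡ x [MOD φ(ℓ ^ m)]` with `e` a multiple of the order of `p` modulo `n`.
  set g := (orderOf_pos_iff.1 (hp ▸ Nat.totient_pos.2 (Nat.pos_of_neZero _))).isUnit.unit
  have hg : orderOf g = Nat.totient (ℓ ^ m) := by rw [← orderOf_units, IsUnit.unit_spec, hp]
  have hcard : Nat.card (ZMod (ℓ ^ m))ˣ = ℓ ^ (m - 1) * (ℓ - 1) := by
    rw [Nat.card_eq_fintype_card, ZMod.card_units_eq_totient, Nat.totient_prime_pow hℓ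
      (Nat.pos_of_ne_zero hm)]
  obtain ⟨x, hx, hgx⟩ := exists_dvd_and_pow_eq_of_pow_eq_one (g := g)
    (u := (IsUnit.of_pow_eq_one hu (pow_ne_zero _ hℓ.ne_zero)).unit)
    (by rw [hg, hcard, Nat.totient_prime_pow hℓ (Nat.pos_of_ne_zero hm)]) hcard
    (Units.ext (by simpa using hu))
  obtain ⟨e, he₁, he₂⟩ := Nat.chineseRemainder' (a := x) (b := 0)
    (Nat.modEq_zero_iff_dvd.2 (hgcd.trans hx))
  refine ⟨e, (ZMod.natCast_eq_natCast_iff_of_coprime hn _ _).2 ⟨?_, ?_⟩⟩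
  · have hpe : (p : ZMod (ℓ ^ m)) ^ e = 1 + ℓ * t := by
      have h := congrArg Units.val ((pow_eq_pow_iff_modEq.2 (hg ▸ he₁)).trans hgx)
      rwa [Units.val_pow_eq_pow_val, IsUnit.unit_spec, IsUnit.unit_spec] at h
    push_cast at ht ⊢
    rw [hpe, ht]
  · have hpe : (p : ZMod n) ^ e = 1 := orderOf_dvd_iff_pow_eq_one.1 (Nat.modEq_zero_iff_dvd.1 he₂)
    simp [hpe]

theorem Algebra.trace_pow_card {K L : Type*} [Field K] [Fintype K] [Field L] [Finite L]
    [Algebra K L] (x : L) :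
    Algebra.trace K L (x ^ Fintype.card K) = Algebra.trace K L x :=
  Algebra.trace_eq_of_algEquiv (FiniteField.frobeniusAlgEquiv K L (ringExpChar L)) x

def canonicalAddChar (p : ℕ) (F : Type*) [Field F] [Algebra (ZMod p) F] (x : F) : ℂ :=
  Complex.exp (2 * (Real.pi : ℂ) * Complex.I * ((Algebra.trace (ZMod p) F x).val : ℂ) / (p : ℂ))

theorem canonicalAddChar_pow_char (p : ℕ) [Fact p.Prime] (F : Type*) [Field F] [Finite F]
    [Algebra (ZMod p) F] (x : F) : canonicalAddChar p F (x ^ p) = canonicalAddChar p F x := by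
  have h := Algebra.trace_pow_card (K := ZMod p) x
  rw [ZMod.card] at h
  rw [canonicalAddChar, canonicalAddChar, h]

theorem Finset.sum_range_succ_eq_of_eq {M : Type*} [AddCancelCommMonoid M] {f : ℕ → M} {n : ℕ}
    (h : f n = f 0) : ∑ r ∈ range n, f (r + 1) = ∑ r ∈ range n, f r :=
  add_right_cancel (b := f 0) (by rw [← sum_range_succ', sum_range_succ, h])

theorem ZMod.sum_range_mul_add_sub_mul_eq {M : Type*} [AddCancelCommMonoid M] {n P c : ℕ}
    [NeZero n] (hP : P ∣ n) (hc : c.Coprime P) {H : ZMod n → M}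
    (hH : ∀ v : ZMod n, ¬ P ∣ v.val → H (v + ((P * c : ℕ) : ZMod n)) = H v) (w : ℕ) {i : ℕ}
    (hi : i < P) :
    ∑ r ∈ range P, H (c * r + (P * w - c * i)) = ∑ r ∈ range P, H (c * r + P * w) := by
  induction i with
  | zero => simp
  | succ i ih =>
    rw [← ih (by omega), ← sum_range_succ_eq_of_eq]
    · refine sum_congr rfl fun r _ => congrArg H ?_
      push_cast
      ring
    · -- the term entering the window lies `P * c` beyond the one leaving it, `P * w - c * (i + 1)`,
      -- which is not divisible by `P`
      have hv : ¬ P ∣ ((P : ZMod n) * w - c * (i + 1 : ℕ)).val := by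
        intro hdvd
        have h0 := (ZMod.natCast_eq_zero_iff _ _).2 hdvd
        rw [ZMod.natCast_val, ZMod.cast_sub hP, ZMod.cast_mul hP, ZMod.cast_mul hP] at h0
        simp only [ZMod.cast_natCast hP, ZMod.natCast_self, zero_mul, zero_sub, neg_eq_zero,
          ← Nat.cast_mul, ZMod.natCast_eq_zero_iff] at h0
        have := Nat.le_of_dvd (by omega) (hc.symm.dvd_of_dvd_mul_left h0)
        omega
      convert hH _ hv using 2 <;> push_cast <;> ring

section GaussPeriod

variable {F M : Type*} [Field F] [Fintype F] [AddCommMonoid M]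

def gaussPeriod (ψ : F → M) (K : Subgroup Fˣ) (g : Fˣ) : M :=
  ∑ h : K, ψ ((g * h : Fˣ) : F)

theorem gaussPeriod_mul_of_mem (ψ : F → M) {K : Subgroup Fˣ} (g : Fˣ) {h : Fˣ} (hh : h ∈ K) :
    gaussPeriod ψ K (g * h) = gaussPeriod ψ K g := by
  unfold gaussPeriod
  exact Fintype.sum_equiv (Equiv.mulLeft ⟨h, hh⟩) _ _ (fun k => by simp [mul_assoc])

theorem gaussPeriod_comp_mul (ψ : F → M) (K : Subgroup Fˣ) (c g : Fˣ) :
    gaussPeriod (fun x => ψ (c * x)) K g = gaussPeriod ψ K (c * g) := by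
  simp [gaussPeriod, mul_assoc]

theorem gaussPeriod_pow_char (p : ℕ) [ExpChar F p] {ψ : F → M} (hψ : ∀ x, ψ (x ^ p) = ψ x)
    (K : Subgroup Fˣ) (g : Fˣ) :
    gaussPeriod ψ K (g ^ p) = gaussPeriod ψ K g := by
  have hinj : Function.Injective (fun k : K => k ^ p) := by
    intro k k' h
    have h' : ((k : Fˣ) : F) ^ p = ((k' : Fˣ) : F) ^ p := by
      simpa using congrArg (fun k : K => ((k : Fˣ) : F)) h
    exact Subtype.ext (Units.ext (frobenius_inj F p h'))
  unfold gaussPeriod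
  refine (Fintype.sum_bijective _ (Finite.injective_iff_bijective.1 hinj) _ _ (fun k => ?_)).symm
  simp [← hψ ((g : F) * (k : Fˣ)), mul_pow]

theorem gaussPeriod_pow_char_pow (p : ℕ) [ExpChar F p] {ψ : F → M} (hψ : ∀ x, ψ (x ^ p) = ψ x)
    (K : Subgroup Fˣ) (g : Fˣ) (e : ℕ) :
    gaussPeriod ψ K (g ^ p ^ e) = gaussPeriod ψ K g := by
  induction e with
  | zero => simp
  | succ e ih => rw [pow_succ, pow_mul, gaussPeriod_pow_char p hψ, ih]

theorem gaussPeriod_zpowers_pow_eq_of_modEq (ψ : F → M) (γ : Fˣ) {N s s' : ℕ}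
    (h : s ≡ s' [MOD N]) :
    gaussPeriod ψ (Subgroup.zpowers (γ ^ N)) (γ ^ s) =
      gaussPeriod ψ (Subgroup.zpowers (γ ^ N)) (γ ^ s') := by
  have hmod : ∀ r, gaussPeriod ψ (Subgroup.zpowers (γ ^ N)) (γ ^ r) =
      gaussPeriod ψ (Subgroup.zpowers (γ ^ N)) (γ ^ (r % N)) := fun r => by
    conv_lhs => rw [← Nat.mod_add_div r N, pow_add, pow_mul]
    exact gaussPeriod_mul_of_mem ψ _ (Subgroup.pow_mem _ (Subgroup.mem_zpowers _) _)
  rw [hmod s, hmod s', h]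

theorem sum_setOf_pow_eq_sum_gaussPeriod (φ : F → M) (γ : Fˣ) {N : ℕ} (hN : N ∣ orderOf γ)
    (P : ℕ) (e : ℕ → ℕ) (he : ∀ i < P, ∀ i' < P, e i ≡ e i' [MOD N] → i = i') :
    ∑ x ∈ (Set.toFinite {x : F | ∃ i < P, ∃ t : ℕ, x = (γ : F) ^ (e i + N * t)}).toFinset, φ x =
      ∑ i ∈ range P, gaussPeriod φ (Subgroup.zpowers (γ ^ N)) (γ ^ e i) := by
  set K := Subgroup.zpowers (γ ^ N)
  set f : ℕ × K → F := fun ik => ((γ ^ e ik.1 * ik.2 : Fˣ) : F)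
  have hset : (Set.toFinite {x : F | ∃ i < P, ∃ t : ℕ, x = (γ : F) ^ (e i + N * t)}).toFinset =
      (range P ×ˢ univ).image f := by
    ext x
    simp only [Set.Finite.mem_toFinset, Set.mem_ofPred_eq, mem_image, mem_product, mem_range,
      mem_univ, and_true, Prod.exists, f]
    constructor
    · rintro ⟨i, hi, t, rfl⟩
      exact ⟨i, ⟨(γ ^ N) ^ t, Subgroup.pow_mem _ (Subgroup.mem_zpowers _) t⟩, hi, by
        push_cast; rw [pow_add, pow_mul]⟩
    · rintro ⟨i, ⟨k, hk⟩, hi, rfl⟩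
      obtain ⟨t, rfl⟩ := mem_powers_iff_mem_zpowers.2 hk
      exact ⟨i, hi, t, by push_cast; rw [pow_add, pow_mul]⟩
  have hinj : Set.InjOn f (range P ×ˢ univ : Finset (ℕ × K)) := by
    rintro ⟨i, ⟨k, hk⟩⟩ hik ⟨i', ⟨k', hk'⟩⟩ hik' heq
    simp only [coe_product, coe_range, coe_univ, Set.mem_prod, Set.mem_Iio, Set.mem_univ,
      and_true] at hik hik'
    have heq : γ ^ e i * k = γ ^ e i' * k' := Units.ext heq
    obtain ⟨z, rfl⟩ := Subgroup.mem_zpowers_iff.1 hk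
    obtain ⟨z', rfl⟩ := Subgroup.mem_zpowers_iff.1 hk'
    have hmod : (e i : ℤ) + N * z ≡ e i' + N * z' [ZMOD N] := by
      refine (zpow_eq_zpow_iff_modEq.1 ?_).of_dvd (Int.natCast_dvd_natCast.2 hN)
      simpa [zpow_add, zpow_mul] using heq
    have hi : i = i' := he i hik i' hik' <| Int.natCast_modEq_iff.1 <| by
      simpa [Int.ModEq, Int.add_mul_emod_self_left] using hmod
    subst hi
    rw [mul_right_inj] at heq
    simp only [heq]
  rw [hset, sum_image hinj, sum_product]
  rfl

/-- The period `η(v)` of `ψ` over the cyclotomic class `C_v = γ^v ⟨γ^N⟩`. -/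
def zmodGaussPeriod (ψ : F → M) (γ : Fˣ) (N : ℕ) (v : ZMod N) : M :=
  gaussPeriod ψ (Subgroup.zpowers (γ ^ N)) (γ ^ v.val)

theorem zmodGaussPeriod_natCast (ψ : F → M) (γ : Fˣ) (N s : ℕ) :
    zmodGaussPeriod ψ γ N s = gaussPeriod ψ (Subgroup.zpowers (γ ^ N)) (γ ^ s) := by
  rw [zmodGaussPeriod, ZMod.val_natCast]
  exact gaussPeriod_zpowers_pow_eq_of_modEq ψ γ (Nat.mod_modEq s N)

theorem zmodGaussPeriod_pow_char_pow_mul (p : ℕ) [ExpChar F p] {ψ : F → M}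
    (hψ : ∀ x, ψ (x ^ p) = ψ x) (γ : Fˣ) {N : ℕ} [NeZero N] (e : ℕ) (v : ZMod N) :
    zmodGaussPeriod ψ γ N ((p : ZMod N) ^ e * v) = zmodGaussPeriod ψ γ N v := by
  have hv : (p : ZMod N) ^ e * v = ((p ^ e * v.val : ℕ) : ZMod N) := by simp
  rw [hv, zmodGaussPeriod_natCast, mul_comm, pow_mul, gaussPeriod_pow_char_pow p hψ,
    zmodGaussPeriod]

theorem sum_setOf_pow_mul_eq_sum_zmodGaussPeriod (φ : F → M) (γ : Fˣ) {N P c : ℕ}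
    (hN : N ∣ orderOf γ) (hP : P ∣ N) (hc : c.Coprime P) (b d : ℕ) :
    ∑ x ∈ (Set.toFinite {x : F | ∃ i < P, ∃ t : ℕ, x = (γ : F) ^ (i * c + d + N * t)}).toFinset,
      φ ((γ : F) ^ b * x) = ∑ r ∈ range P, zmodGaussPeriod φ γ N ((b + (r * c + d) : ℕ)) := by
  rw [sum_setOf_pow_eq_sum_gaussPeriod (fun x => φ ((γ : F) ^ b * x)) γ hN P (fun i => i * c + d)
    fun i hi i' hi' h => (Nat.ModEq.cancel_right_of_coprime hc.symm
      ((Nat.ModEq.add_right_cancel' d h).of_dvd hP)).eq_of_lt_of_lt hi hi']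
  refine sum_congr rfl fun r _ => ?_
  rw [← Units.val_pow_eq_pow_val, gaussPeriod_comp_mul, ← pow_add, zmodGaussPeriod_natCast]

theorem zmodGaussPeriod_add_eq_of_not_dvd {p : ℕ} [ExpChar F p] {ψ : F → M}
    (hψ : ∀ x, ψ (x ^ p) = ψ x) (γ : Fˣ) {ℓ m n : ℕ} [NeZero (ℓ ^ m * n)] (hℓ : ℓ.Prime)
    (hn : (ℓ ^ m).Coprime n) (hp : orderOf (p : ZMod (ℓ ^ m)) = Nat.totient (ℓ ^ m))
    (hgcd : (Nat.totient (ℓ ^ m)).gcd (orderOf (p : ZMod n)) ∣ ℓ - 1)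
    (v : ZMod (ℓ ^ m * n)) (hv : ¬ ℓ ^ (m - 1) ∣ v.val) :
    zmodGaussPeriod ψ γ (ℓ ^ m * n) (v + ((ℓ ^ (m - 1) * n : ℕ) : ZMod (ℓ ^ m * n))) =
      zmodGaussPeriod ψ γ (ℓ ^ m * n) v := by
  obtain ⟨e, he⟩ := ZMod.exists_pow_mul_eq_add hℓ hn hp hgcd hv
  rw [← zmodGaussPeriod_pow_char_pow_mul p hψ γ e v]
  push_cast [ZMod.natCast_val, ZMod.cast_id] at he ⊢
  rw [he]

end GaussPeriod

theorem char_sum_indep_two_primes_general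
    (p1 p2 m N p f q : ℕ)
    (hp1 : p1.Prime) (hp2 : p2.Prime)
    (hmod : (p1 % 4 = 1 ∧ p2 % 4 = 3) ∨ (p1 % 4 = 3 ∧ p2 % 4 = 1))
    (hm : 1 ≤ m) (hN : N = p1 ^ m * p2)
    (hp : p.Prime)
    (hord1 : orderOf (p : ZMod (p1 ^ m)) = Nat.totient (p1 ^ m))
    (hord2 : orderOf (p : ZMod p2) = Nat.totient p2)
    (hf : f = orderOf (p : ZMod N)) (hf2 : 2 * f = N.totient)
    (hq : q = p ^ f)
    (F : Type) [Field F] [Fintype F] [Algebra (ZMod p) F]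
    (γ : Fˣ) (hγ : orderOf γ = q - 1)
    (D : ℕ → Set F)
    (hD : ∀ k, D k = {x : F | ∃ i < p1 ^ (m - 1), ∃ t : ℕ,
        x = ((γ : F)) ^ (i * p2 + k * p1 ^ (m - 1) + N * t)}) :
    (∀ a < N, ∃! ij : ℕ × ℕ, (ij.1 < p1 ^ (m - 1) ∧ ij.2 < p1 * p2) ∧
        (a : ZMod N) = -((p2 * ij.1 : ℕ) : ZMod N) + ((p1 ^ (m - 1) * ij.2 : ℕ) : ZMod N)) ∧
    (∀ a a' : ℕ, a < N → a' < N →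
      ∀ i i' j : ℕ, i < p1 ^ (m - 1) → i' < p1 ^ (m - 1) → j < p1 * p2 →
        (a : ZMod N) = -((p2 * i : ℕ) : ZMod N) + ((p1 ^ (m - 1) * j : ℕ) : ZMod N) →
        (a' : ZMod N) = -((p2 * i' : ℕ) : ZMod N) + ((p1 ^ (m - 1) * j : ℕ) : ZMod N) →
        ∀ k < p1 * p2,
          ∑ x ∈ (Set.toFinite (D k)).toFinset,
            Complex.exp (2 * (Real.pi : ℂ) * Complex.I *
              ((Algebra.trace (ZMod p) F ((γ : F) ^ a * x)).val : ℂ) / (p : ℂ)) =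
          ∑ x ∈ (Set.toFinite (D k)).toFinset,
            Complex.exp (2 * (Real.pi : ℂ) * Complex.I *
              ((Algebra.trace (ZMod p) F ((γ : F) ^ a' * x)).val : ℂ) / (p : ℂ))) := by
  subst hN
  have hne : p1 ≠ p2 := by rintro rfl; omega
  have hcop12 : (p1 ^ m).Coprime p2 := ((Nat.coprime_primes hp1 hp2).2 hne).pow_left m
  have hPN : p1 ^ (m - 1) ∣ p1 ^ m := pow_dvd_pow p1 (Nat.sub_le m 1)
  have hcopP : p2.Coprime (p1 ^ (m - 1)) := (hcop12.coprime_dvd_left hPN).symm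
  have hNpos : 0 < p1 ^ m * p2 := Nat.mul_pos (pow_pos hp1.pos m) hp2.pos
  have : NeZero (p1 ^ m * p2) := ⟨hNpos.ne'⟩
  have hgcd : (Nat.totient (p1 ^ m)).gcd (orderOf (p : ZMod p2)) ∣ p1 - 1 := by
    rw [hord2, Nat.gcd_totient_eq_two_of_orderOf_eq hcop12 hNpos hord1 hord2 (hf ▸ hf2)]
    omega
  have hNγ : p1 ^ m * p2 ∣ orderOf γ := hγ ▸ hq ▸ hf ▸ ZMod.dvd_pow_orderOf_sub_one hp.pos _
  refine ⟨fun a _ => ZMod.existsUnique_neg_mul_add_mul (by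
    rw [← mul_assoc, ← pow_succ, Nat.sub_add_cancel hm]) hNpos hcopP _, ?_⟩
  intro a a' _ _ i i' j hi hi' _ ha ha' k _
  have : Fact p.Prime := ⟨hp⟩
  have : CharP F p := charP_of_injective_algebraMap (algebraMap (ZMod p) F).injective p
  have hsum : ∀ b ib : ℕ, ib < p1 ^ (m - 1) →
      (b : ZMod (p1 ^ m * p2)) = -((p2 * ib : ℕ) : ZMod (p1 ^ m * p2)) +
        ((p1 ^ (m - 1) * j : ℕ) : ZMod (p1 ^ m * p2)) →
      ∑ x ∈ (Set.toFinite (D k)).toFinset, canonicalAddChar p F ((γ : F) ^ b * x) =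
        ∑ r ∈ range (p1 ^ (m - 1)), zmodGaussPeriod (canonicalAddChar p F) γ (p1 ^ m * p2)
          (p2 * r + ((p1 ^ (m - 1) : ℕ) : ZMod (p1 ^ m * p2)) * (j + k : ℕ)) := by
    intro b ib hib hb
    rw [hD, sum_setOf_pow_mul_eq_sum_zmodGaussPeriod _ γ hNγ (hPN.mul_right p2) hcopP,
      ← ZMod.sum_range_mul_add_sub_mul_eq (hPN.mul_right p2) hcopP
        (zmodGaussPeriod_add_eq_of_not_dvd (canonicalAddChar_pow_char p F) γ hp1 hcop12 hord1
          hgcd) _ hib]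
    refine sum_congr rfl fun r _ => congrArg _ ?_
    push_cast [hb]
    ring
  exact (hsum a i hi ha).trans (hsum a' i' hi' ha').symm

/-- For `N = p1^m * p2`, every `a` has a unique representation
`a ≡ -p2*i_a + p1^(m-1)*j_a (mod N)`, and the additive character sum of `ψ` over
`γ^a * D_k` depends only on `j_a` and `k`, not on `i_a`. -/
theorem char_sum_indep_two_primes
    (p1 p2 m N p f q : ℕ)
    (hp1 : p1.Prime) (hp2 : p2.Prime)
    (hmod : (p1 % 4 = 1 ∧ p2 % 4 = 3) ∨ (p1 % 4 = 3 ∧ p2 % 4 = 1))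
    (hm : 1 ≤ m) (hN : N = p1 ^ m * p2)
    (hp : p.Prime) (hcop : Nat.Coprime p N)
    (hord1 : orderOf (p : ZMod (p1 ^ m)) = Nat.totient (p1 ^ m))
    (hord2 : orderOf (p : ZMod p2) = Nat.totient p2)
    (hf : f = orderOf (p : ZMod N)) (hf2 : 2 * f = N.totient)
    (hq : q = p ^ f)
    (F : Type) [Field F] [Fintype F] [Algebra (ZMod p) F]
    (hF : Fintype.card F = q)
    (γ : Fˣ) (hγ : orderOf γ = q - 1)
    (D : ℕ → Set F)
    (hD : ∀ k, D k = {x : F | ∃ i < p1 ^ (m - 1), ∃ t : ℕ,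
        x = ((γ : F)) ^ (i * p2 + k * p1 ^ (m - 1) + N * t)}) :
    (∀ a < N, ∃! ij : ℕ × ℕ, (ij.1 < p1 ^ (m - 1) ∧ ij.2 < p1 * p2) ∧
        (a : ZMod N) = -((p2 * ij.1 : ℕ) : ZMod N) + ((p1 ^ (m - 1) * ij.2 : ℕ) : ZMod N)) ∧
    (∀ a a' : ℕ, a < N → a' < N →
      ∀ i i' j : ℕ, i < p1 ^ (m - 1) → i' < p1 ^ (m - 1) → j < p1 * p2 →
        (a : ZMod N) = -((p2 * i : ℕ) : ZMod N) + ((p1 ^ (m - 1) * j : ℕ) : ZMod N) →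
        (a' : ZMod N) = -((p2 * i' : ℕ) : ZMod N) + ((p1 ^ (m - 1) * j : ℕ) : ZMod N) →
        ∀ k < p1 * p2,
          ∑ x ∈ (Set.toFinite (D k)).toFinset,
            Complex.exp (2 * (Real.pi : ℂ) * Complex.I *
              ((Algebra.trace (ZMod p) F ((γ : F) ^ a * x)).val : ℂ) / (p : ℂ)) =
          ∑ x ∈ (Set.toFinite (D k)).toFinset,
            Complex.exp (2 * (Real.pi : ℂ) * Complex.I *
              ((Algebra.trace (ZMod p) F ((γ : F) ^ a' * x)).val : ℂ) / (p : ℂ))) :=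
  char_sum_indep_two_primes_general p1 p2 m N p f q hp1 hp2 hmod hm hN hp hord1 hord2 hf hf2 hq F γ
    hγ D hD
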